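/- arXiv:2506.17405 — 2 statements merged into one kernel-verified Lean document; each statement's English description precedes it below -/
import Mathlib

section
/- If a sequence of pairs (x^k, λ^k) in (ℝ^d)^{n+1} × (ℝ^d)^n satisfies: (i) ‖x^{k+1} − x^k‖ → 0 and ‖λ^{k+1} − λ^k‖ → 0; (ii) for each k and each i, (1/(2η_i))(x_i^{k+1} − x_i^k) = ∇_{x_i} L_ρ(x_{<i}^{k+1}, x_i^{k+1}, x_{>i}^k, λ^k); and (iii) (1/ρ_j)(λ_j^{k+1} − λ_j^k) = x_{j+1}^{k+1} − φ(x_j^{k+1}); and L_ρ is continuously differentiable, then every accumulation point (x⋆, λ⋆) of the sequence satisfies ∇_x L_ρ(x⋆, λ⋆) = 0 and x⋆_{j+1} = φ(x⋆_j) for all j, and hence is a KKT point of the constrained problem. -/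
open Filter

noncomputable section KKTAux

variable {d m : ℕ}

/-- The continuous linear inclusion of the `i`-th coordinate into a pi type. -/
noncomputable def kktSing (d m : ℕ) (i : Fin m) :
    EuclideanSpace ℝ (Fin d) →L[ℝ] (Fin m → EuclideanSpace ℝ (Fin d)) :=
  LinearMap.toContinuousLinearMap
    (LinearMap.single ℝ (fun _ : Fin m => EuclideanSpace ℝ (Fin d)) i)

lemma kktSing_apply (i : Fin m) (v : EuclideanSpace ℝ (Fin d)) :
    kktSing d m i v = Pi.single i v := rfl

lemma kkt_hasFDerivAt_update (v : Fin m → EuclideanSpace ℝ (Fin d)) (i : Fin m)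
    (a : EuclideanSpace ℝ (Fin d)) :
    HasFDerivAt (fun z => Function.update v i z) (kktSing d m i) a := by
  have h : (fun z : EuclideanSpace ℝ (Fin d) => Function.update v i z)
      = fun z => Function.update v i 0 + kktSing d m i z := by
    funext z
    funext j
    rcases eq_or_ne j i with h | h
    · subst h; simp [kktSing_apply]
    · simp [Function.update_of_ne h, kktSing_apply, Pi.single_eq_of_ne h]
  rw [h]
  exact (kktSing d m i).hasFDerivAt.const_add _

lemma kkt_partial_fderiv (g : (Fin m → EuclideanSpace ℝ (Fin d)) → ℝ)
    (v : Fin m → EuclideanSpace ℝ (Fin d)) (i : Fin m) (a : EuclideanSpace ℝ (Fin d))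
    (hg : DifferentiableAt ℝ g (Function.update v i a)) :
    fderiv ℝ (fun z => g (Function.update v i z)) a
      = (fderiv ℝ g (Function.update v i a)).comp (kktSing d m i) :=
  (hg.hasFDerivAt.comp a (kkt_hasFDerivAt_update v i a)).fderiv

/-- The augmented Lagrangian as a function of the pair. -/
noncomputable def kktPhi (d n : ℕ)
    (f : Fin (n + 1) → EuclideanSpace ℝ (Fin d) → ℝ)
    (φ : EuclideanSpace ℝ (Fin d) → EuclideanSpace ℝ (Fin d)) (ρ : Fin n → ℝ)
    (p : (Fin (n + 1) → EuclideanSpace ℝ (Fin d)) × (Fin n → EuclideanSpace ℝ (Fin d))) : ℝ :=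
  ∑ i, f i (p.1 i) + ∑ j,
    ((inner ℝ (p.2 j) (p.1 j.succ - φ (p.1 j.castSucc)) : ℝ)
      + ρ j / 2 * ‖p.1 j.succ - φ (p.1 j.castSucc)‖ ^ 2)

end KKTAux

theorem accumulation_points_are_kkt
    (d n : ℕ) (f : Fin (n + 1) → EuclideanSpace ℝ (Fin d) → ℝ)
    (hf : ∀ i, ContDiff ℝ 1 (f i))
    (φ : EuclideanSpace ℝ (Fin d) → EuclideanSpace ℝ (Fin d)) (hφ : ContDiff ℝ 1 φ)
    (ρ : Fin n → ℝ) (hρ : ∀ j, 0 < ρ j)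
    (η : Fin (n + 1) → ℝ) (hη : ∀ i, 0 < η i)
    (Lρ : (Fin (n + 1) → EuclideanSpace ℝ (Fin d)) → (Fin n → EuclideanSpace ℝ (Fin d)) → ℝ)
    (hL : Lρ = fun x l => ∑ i, f i (x i) + ∑ j,
        ((inner ℝ (l j) (x j.succ - φ (x j.castSucc)) : ℝ)
          + ρ j / 2 * ‖x j.succ - φ (x j.castSucc)‖ ^ 2))
    (x : ℕ → Fin (n + 1) → EuclideanSpace ℝ (Fin d))
    (lam : ℕ → Fin n → EuclideanSpace ℝ (Fin d))
    (hxdiff : Tendsto (fun k => ‖x (k + 1) - x k‖) atTop (nhds 0))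
    (hlamdiff : Tendsto (fun k => ‖lam (k + 1) - lam k‖) atTop (nhds 0))
    (hopt : ∀ (k : ℕ) (i : Fin (n + 1)),
      (1 / (2 * η i)) • (x (k + 1) i - x k i) =
        gradient (fun z => Lρ (Function.update
          (fun j => if j ≤ i then x (k + 1) j else x k j) i z) (lam k)) (x (k + 1) i))
    (hdual : ∀ (k : ℕ) (j : Fin n),
      (1 / ρ j) • (lam (k + 1) j - lam k j) =
        x (k + 1) j.succ - φ (x (k + 1) j.castSucc)) :
    ∀ (xs : Fin (n + 1) → EuclideanSpace ℝ (Fin d)) (ls : Fin n → EuclideanSpace ℝ (Fin d))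
      (ψ : ℕ → ℕ), StrictMono ψ →
      Tendsto (fun s => (x (ψ s), lam (ψ s))) atTop (nhds (xs, ls)) →
      (fderiv ℝ (fun z => Lρ z ls) xs = 0 ∧
        ∀ j : Fin n, xs j.succ = φ (xs j.castSucc)) ∧
      fderiv ℝ (fun z : Fin (n + 1) → EuclideanSpace ℝ (Fin d) =>
        ∑ i, f i (z i) + ∑ j, (inner ℝ (ls j) (z j.succ - φ (z j.castSucc)) : ℝ)) xs = 0 := by
  intro xs ls ψ hψ hlim
  subst hL
  -- basic convergence facts
  have hψt : Tendsto ψ atTop atTop := hψ.tendsto_atTop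
  have hx : Tendsto (fun s => x (ψ s)) atTop (nhds xs) :=
    (continuous_fst.tendsto _).comp hlim
  have hl : Tendsto (fun s => lam (ψ s)) atTop (nhds ls) :=
    (continuous_snd.tendsto _).comp hlim
  have hdx : Tendsto (fun s => x (ψ s + 1) - x (ψ s)) atTop (nhds 0) := by
    rw [tendsto_zero_iff_norm_tendsto_zero]
    exact hxdiff.comp hψt
  have hdl : Tendsto (fun s => lam (ψ s + 1) - lam (ψ s)) atTop (nhds 0) := by
    rw [tendsto_zero_iff_norm_tendsto_zero]
    exact hlamdiff.comp hψt
  have hx1 : Tendsto (fun s => x (ψ s + 1)) atTop (nhds xs) := by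
    have := hx.add hdx
    simpa using this
  -- the constraints hold at the accumulation point
  have hcon : ∀ j : Fin n, xs j.succ - φ (xs j.castSucc) = 0 := by
    intro j
    have h1 : Tendsto (fun s => x (ψ s + 1) j.succ - φ (x (ψ s + 1) j.castSucc)) atTop
        (nhds (xs j.succ - φ (xs j.castSucc))) := by
      refine Tendsto.sub ?_ ?_
      · exact ((continuous_apply j.succ).tendsto xs).comp hx1
      · exact (hφ.continuous.tendsto _).comp (((continuous_apply j.castSucc).tendsto xs).comp hx1)
    have h2 : Tendsto (fun s => x (ψ s + 1) j.succ - φ (x (ψ s + 1) j.castSucc)) atTop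
        (nhds 0) := by
      have h3 : Tendsto (fun s => (1 / ρ j) • (lam (ψ s + 1) j - lam (ψ s) j)) atTop (nhds 0) := by
        have h4 : Tendsto (fun s => lam (ψ s + 1) j - lam (ψ s) j) atTop (nhds 0) := by
          have := ((continuous_apply j).tendsto (0 : (Fin n → EuclideanSpace ℝ (Fin d)))).comp hdl
          simpa [Function.comp_def] using this
        simpa using h4.const_smul (1 / ρ j)
      have heq : (fun s => (1 / ρ j) • (lam (ψ s + 1) j - lam (ψ s) j))
          = fun s => x (ψ s + 1) j.succ - φ (x (ψ s + 1) j.castSucc) := by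
        funext s; exact hdual (ψ s) j
      rwa [heq] at h3
    exact tendsto_nhds_unique h1 h2
  -- smoothness of the augmented Lagrangian in the pair
  have hc : ∀ j : Fin n, ContDiff ℝ 1 (fun z : (Fin (n + 1) → EuclideanSpace ℝ (Fin d)) => z j.succ - φ (z j.castSucc)) := by
    intro j
    exact ((ContinuousLinearMap.proj (R := ℝ) (φ := fun _ : Fin (n + 1) => (EuclideanSpace ℝ (Fin d))) j.succ).contDiff).sub
      (hφ.comp (ContinuousLinearMap.proj (R := ℝ) (φ := fun _ : Fin (n + 1) => (EuclideanSpace ℝ (Fin d))) j.castSucc).contDiff)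
  have hΦ : ContDiff ℝ 1 (kktPhi d n f φ ρ) := by
    unfold kktPhi
    refine ContDiff.add ?_ ?_
    · exact ContDiff.sum fun i _ => (hf i).comp
        ((ContinuousLinearMap.proj (R := ℝ) (φ := fun _ : Fin (n + 1) => (EuclideanSpace ℝ (Fin d))) i).contDiff.comp
          contDiff_fst)
    · refine ContDiff.sum fun j _ => ContDiff.add ?_ ?_
      · exact ContDiff.inner ℝ
          ((ContinuousLinearMap.proj (R := ℝ) (φ := fun _ : Fin n => (EuclideanSpace ℝ (Fin d))) j).contDiff.comp
            contDiff_snd)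
          ((hc j).comp contDiff_fst)
      · exact contDiff_const.mul (((hc j).comp contDiff_fst).norm_sq ℝ)
  -- partial derivatives in the first variable
  have hfd : ∀ (a : (Fin (n + 1) → EuclideanSpace ℝ (Fin d))) (l : (Fin n → EuclideanSpace ℝ (Fin d))), HasFDerivAt (fun z => kktPhi d n f φ ρ (z, l))
      ((fderiv ℝ (kktPhi d n f φ ρ) (a, l)).comp (ContinuousLinearMap.inl ℝ (Fin (n + 1) → EuclideanSpace ℝ (Fin d)) (Fin n → EuclideanSpace ℝ (Fin d)))) a :=
    fun a l => ((hΦ.differentiable one_ne_zero (a, l)).hasFDerivAt).comp (f := fun e => (e, l)) a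
      (hasFDerivAt_prodMk_left (𝕜 := ℝ) a l)
  -- the key vanishing of the full derivative composed with each coordinate inclusion
  have key : ∀ i : Fin (n + 1),
      (fderiv ℝ (fun z => kktPhi d n f φ ρ (z, ls)) xs).comp (kktSing d (n + 1) i) = 0 := by
    intro i
    -- the mixed point
    set w : ℕ → (Fin (n + 1) → EuclideanSpace ℝ (Fin d)) := fun k j => if j ≤ i then x (k + 1) j else x k j with hw
    have hwk : ∀ k, Function.update (w k) i (x (k + 1) i) = w k := by
      intro k
      have : x (k + 1) i = w k i := by simp [hw]
      rw [this, Function.update_eq_self]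
    have hopt' : ∀ k, (fderiv ℝ (fun z => kktPhi d n f φ ρ (z, lam k)) (w k)).comp
        (kktSing d (n + 1) i)
        = (InnerProductSpace.toDual ℝ (EuclideanSpace ℝ (Fin d))) ((1 / (2 * η i)) • (x (k + 1) i - x k i)) := by
      intro k
      have h1 : (1 / (2 * η i)) • (x (k + 1) i - x k i) =
          gradient (fun z => kktPhi d n f φ ρ (Function.update (w k) i z, lam k))
            (x (k + 1) i) := hopt k i
      have hdiff : DifferentiableAt ℝ (fun z => kktPhi d n f φ ρ (z, lam k))
          (Function.update (w k) i (x (k + 1) i)) := by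
        rw [hwk k]; exact (hfd (w k) (lam k)).differentiableAt
      have h2 := kkt_partial_fderiv (fun z => kktPhi d n f φ ρ (z, lam k)) (w k) i
        (x (k + 1) i) hdiff
      rw [hwk k] at h2
      rw [← h2, h1]
      exact ((InnerProductSpace.toDual ℝ (EuclideanSpace ℝ (Fin d))).apply_symm_apply _).symm
    -- convergence of the mixed points
    have hwlim : Tendsto (fun s => w (ψ s)) atTop (nhds xs) := by
      rw [tendsto_pi_nhds]
      intro j
      by_cases h : j ≤ i
      · have : (fun s => w (ψ s) j) = fun s => x (ψ s + 1) j := by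
          funext s; simp [hw, h]
        rw [this]
        exact ((continuous_apply j).tendsto xs).comp hx1
      · have : (fun s => w (ψ s) j) = fun s => x (ψ s) j := by
          funext s; simp [hw, h]
        rw [this]
        exact ((continuous_apply j).tendsto xs).comp hx
    -- continuity of the derivative map
    have hT : Continuous (fun p : (Fin (n + 1) → EuclideanSpace ℝ (Fin d)) × (Fin n → EuclideanSpace ℝ (Fin d)) =>
        ((fderiv ℝ (kktPhi d n f φ ρ) p).comp (ContinuousLinearMap.inl ℝ (Fin (n + 1) → EuclideanSpace ℝ (Fin d)) (Fin n → EuclideanSpace ℝ (Fin d)))).comp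
          (kktSing d (n + 1) i)) := by
      refine Continuous.clm_comp_const ?_ _
      exact Continuous.clm_comp_const (hΦ.continuous_fderiv one_ne_zero) _
    have hglim : Tendsto (fun s =>
        ((fderiv ℝ (kktPhi d n f φ ρ) (w (ψ s), lam (ψ s))).comp
          (ContinuousLinearMap.inl ℝ (Fin (n + 1) → EuclideanSpace ℝ (Fin d)) (Fin n → EuclideanSpace ℝ (Fin d)))).comp (kktSing d (n + 1) i)) atTop
        (nhds (((fderiv ℝ (kktPhi d n f φ ρ) (xs, ls)).comp
          (ContinuousLinearMap.inl ℝ (Fin (n + 1) → EuclideanSpace ℝ (Fin d)) (Fin n → EuclideanSpace ℝ (Fin d)))).comp (kktSing d (n + 1) i))) :=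
      (hT.tendsto _).comp (hwlim.prodMk_nhds hl)
    have hzero : Tendsto (fun s =>
        (InnerProductSpace.toDual ℝ (EuclideanSpace ℝ (Fin d))) ((1 / (2 * η i)) • (x (ψ s + 1) i - x (ψ s) i)))
        atTop (nhds 0) := by
      have h4 : Tendsto (fun s => x (ψ s + 1) i - x (ψ s) i) atTop (nhds 0) := by
        have := ((continuous_apply i).tendsto (0 : (Fin (n + 1) → EuclideanSpace ℝ (Fin d)))).comp hdx
        simpa [Function.comp_def] using this
      have h5 : Tendsto (fun s => (1 / (2 * η i)) • (x (ψ s + 1) i - x (ψ s) i)) atTop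
          (nhds 0) := by simpa using h4.const_smul (1 / (2 * η i))
      have h6 := ((InnerProductSpace.toDual ℝ (EuclideanSpace ℝ (Fin d))).continuous.tendsto 0).comp h5
      simpa only [Function.comp_def, map_zero] using h6
    have heq : (fun s =>
        ((fderiv ℝ (kktPhi d n f φ ρ) (w (ψ s), lam (ψ s))).comp
          (ContinuousLinearMap.inl ℝ (Fin (n + 1) → EuclideanSpace ℝ (Fin d)) (Fin n → EuclideanSpace ℝ (Fin d)))).comp (kktSing d (n + 1) i))
        = fun s => (InnerProductSpace.toDual ℝ (EuclideanSpace ℝ (Fin d)))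
            ((1 / (2 * η i)) • (x (ψ s + 1) i - x (ψ s) i)) := by
      funext s
      rw [← (hfd (w (ψ s)) (lam (ψ s))).fderiv]
      exact hopt' (ψ s)
    rw [heq] at hglim
    have hfinal := tendsto_nhds_unique hglim hzero
    rw [(hfd xs ls).fderiv]
    exact hfinal
  -- assemble: full derivative vanishes
  have hD : fderiv ℝ (fun z => kktPhi d n f φ ρ (z, ls)) xs = 0 := by
    ext z
    have hz : z = ∑ i, Pi.single i (z i) := (Finset.univ_sum_single z).symm
    rw [ContinuousLinearMap.zero_apply]
    conv_lhs => rw [hz]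
    rw [map_sum]
    refine Finset.sum_eq_zero fun i _ => ?_
    have := congrArg (fun T : (EuclideanSpace ℝ (Fin d)) →L[ℝ] ℝ => T (z i)) (key i)
    simpa [kktSing_apply] using this
  refine ⟨⟨hD, fun j => sub_eq_zero.mp (hcon j)⟩, ?_⟩
  -- the Lagrangian derivative also vanishes
  have hP : HasFDerivAt (fun z : (Fin (n + 1) → EuclideanSpace ℝ (Fin d)) => ∑ j, ρ j / 2 * ‖z j.succ - φ (z j.castSucc)‖ ^ 2)
      (0 : (Fin (n + 1) → EuclideanSpace ℝ (Fin d)) →L[ℝ] ℝ) xs := by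
    have h0 : (0 : (Fin (n + 1) → EuclideanSpace ℝ (Fin d)) →L[ℝ] ℝ) = ∑ j : Fin n, 0 := by simp
    rw [h0]
    refine HasFDerivAt.fun_sum fun j _ => ?_
    have hcd : HasFDerivAt (fun z : (Fin (n + 1) → EuclideanSpace ℝ (Fin d)) => z j.succ - φ (z j.castSucc))
        (fderiv ℝ (fun z : (Fin (n + 1) → EuclideanSpace ℝ (Fin d)) => z j.succ - φ (z j.castSucc)) xs) xs :=
      ((hc j).differentiable one_ne_zero xs).hasFDerivAt
    have hinner := hcd.inner ℝ hcd
    rw [hcon j] at hinner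
    have hzero : ((fderivInnerCLM ℝ ((0 : (EuclideanSpace ℝ (Fin d))), (0 : (EuclideanSpace ℝ (Fin d))))).comp
        ((fderiv ℝ (fun z : (Fin (n + 1) → EuclideanSpace ℝ (Fin d)) => z j.succ - φ (z j.castSucc)) xs).prod
          (fderiv ℝ (fun z : (Fin (n + 1) → EuclideanSpace ℝ (Fin d)) => z j.succ - φ (z j.castSucc)) xs))) = 0 := by
      ext v
      simp
    rw [hzero] at hinner
    have hnorm : (fun z : (Fin (n + 1) → EuclideanSpace ℝ (Fin d)) => ρ j / 2 * ‖z j.succ - φ (z j.castSucc)‖ ^ 2)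
        = fun z : (Fin (n + 1) → EuclideanSpace ℝ (Fin d)) => ρ j / 2 *
            (inner ℝ (z j.succ - φ (z j.castSucc)) (z j.succ - φ (z j.castSucc)) : ℝ) := by
      funext z
      rw [real_inner_self_eq_norm_sq]
    rw [hnorm]
    have := hinner.const_mul (ρ j / 2)
    simpa using this
  have hL0 : HasFDerivAt (fun z => kktPhi d n f φ ρ (z, ls)) (0 : (Fin (n + 1) → EuclideanSpace ℝ (Fin d)) →L[ℝ] ℝ) xs := by
    have h := hfd xs ls
    rwa [(hfd xs ls).fderiv.symm.trans hD] at h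
  have hsplit : (fun z : (Fin (n + 1) → EuclideanSpace ℝ (Fin d)) => kktPhi d n f φ ρ (z, ls))
      = fun z : (Fin (n + 1) → EuclideanSpace ℝ (Fin d)) => (∑ i, f i (z i) + ∑ j, (inner ℝ (ls j) (z j.succ - φ (z j.castSucc)) : ℝ))
          + ∑ j, ρ j / 2 * ‖z j.succ - φ (z j.castSucc)‖ ^ 2 := by
    funext z
    unfold kktPhi
    rw [Finset.sum_add_distrib, add_assoc]
  rw [hsplit] at hL0
  have hA := hL0.fun_sub hP
  simp only [add_sub_cancel_right] at hA
  have : (0 : (Fin (n + 1) → EuclideanSpace ℝ (Fin d)) →L[ℝ] ℝ) - 0 = 0 := by simp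
  rw [this] at hA
  exact hA.fderiv
end

section
/- Under the bound ‖∇φ‖ ≤ M_φ, ‖∇f_i‖ ≤ M_f on a set containing the iterates, the dual iterates of the proximal ADMM satisfy ‖λ_i^{k+1}‖ ≤ ((1 − M_φ^{n−i})/(1 − M_φ)) M_f + Σ_{j=i}^{n−2} ρ_{j+1} M_φ^{j+1−i} ‖x_{j+2}^{k+1} − x_{j+2}^k‖ + Σ_{j=i}^{n−1} (M_φ^{j−i}/η_{j+1}) ‖x_{j+1}^{k+1} − x_{j+1}^k‖ for i = 0,...,n−1, provided M_φ ≠ 1. -/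
theorem admm_dual_iterate_bound
    (d n : ℕ) (hn : 1 ≤ n) (Mf Mφ : ℝ) (hMφ0 : 0 < Mφ) (hMφ1 : Mφ ≠ 1)
    (ρ η : ℕ → ℝ) (hρ : ∀ j, 0 < ρ j) (hη : ∀ i, 0 < η i)
    (gradf : ℕ → EuclideanSpace ℝ (Fin d) → EuclideanSpace ℝ (Fin d))
    (Dφ : EuclideanSpace ℝ (Fin d) → EuclideanSpace ℝ (Fin d) →L[ℝ] EuclideanSpace ℝ (Fin d))
    (hgf : ∀ i y, ‖gradf i y‖ ≤ Mf) (hDφ : ∀ y, ‖Dφ y‖ ≤ Mφ)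
    (xk xk1 lam : ℕ → EuclideanSpace ℝ (Fin d))
    (hlast : lam (n - 1) = -gradf n (xk1 n) - (1 / η n) • (xk1 n - xk n))
    (hrec : ∀ i, i + 2 ≤ n →
      lam i = Dφ (xk1 (i + 1)) (lam (i + 1)) - gradf (i + 1) (xk1 (i + 1))
        - ρ (i + 1) • Dφ (xk1 (i + 1)) (xk1 (i + 2) - xk (i + 2))
        - (1 / η (i + 1)) • (xk1 (i + 1) - xk (i + 1))) :
    ∀ i, i ≤ n - 1 →
      ‖lam i‖ ≤ (1 - Mφ ^ (n - i)) / (1 - Mφ) * Mf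
        + ∑ j ∈ Finset.Ico i (n - 1), ρ (j + 1) * Mφ ^ (j + 1 - i) * ‖xk1 (j + 2) - xk (j + 2)‖
        + ∑ j ∈ Finset.Ico i n, Mφ ^ (j - i) / η (j + 1) * ‖xk1 (j + 1) - xk (j + 1)‖ := by
  have hMf : 0 ≤ Mf := le_trans (norm_nonneg _) (hgf 0 0)
  have hMφ : 0 ≤ Mφ := hMφ0.le
  have h1φ : (1:ℝ) - Mφ ≠ 0 := sub_ne_zero.mpr (Ne.symm hMφ1)
  have key : ∀ m i, i ≤ n - 1 → n - 1 - i = m →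
      ‖lam i‖ ≤ (1 - Mφ ^ (n - i)) / (1 - Mφ) * Mf
        + ∑ j ∈ Finset.Ico i (n - 1), ρ (j + 1) * Mφ ^ (j + 1 - i) * ‖xk1 (j + 2) - xk (j + 2)‖
        + ∑ j ∈ Finset.Ico i n, Mφ ^ (j - i) / η (j + 1) * ‖xk1 (j + 1) - xk (j + 1)‖ := by
    intro m
    induction m with
    | zero =>
      intro i hi h0
      have hieq : i = n - 1 := by omega
      subst hieq
      have hn1 : n - (n - 1) = 1 := by omega
      have hIco : Finset.Ico (n - 1) n = {n - 1} := by
        ext x; simp only [Finset.mem_Ico, Finset.mem_singleton]; omega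
      rw [hlast, hn1, Finset.Ico_self, Finset.sum_empty, hIco, Finset.sum_singleton]
      simp only [Nat.sub_self, pow_zero, pow_one]
      rw [show n - 1 + 1 = n by omega, div_self h1φ, one_mul]
      have hb : ‖-gradf n (xk1 n) - (1 / η n) • (xk1 n - xk n)‖
          ≤ Mf + 1 / η n * ‖xk1 n - xk n‖ := by
        calc ‖-gradf n (xk1 n) - (1 / η n) • (xk1 n - xk n)‖
            ≤ ‖-gradf n (xk1 n)‖ + ‖(1 / η n) • (xk1 n - xk n)‖ := norm_sub_le _ _
          _ = ‖gradf n (xk1 n)‖ + |1 / η n| * ‖xk1 n - xk n‖ := by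
              rw [norm_neg, norm_smul, Real.norm_eq_abs]
          _ ≤ Mf + 1 / η n * ‖xk1 n - xk n‖ := by
              rw [abs_of_pos (div_pos one_pos (hη n))]
              exact add_le_add_left (hgf n (xk1 n)) _
      linarith [hb]
    | succ m ih =>
      intro i hi hm
      have h2 : i + 2 ≤ n := by omega
      have hb := ih (i + 1) (by omega) (by omega)
      -- norm estimate on the recursion
      have hDl : ‖Dφ (xk1 (i + 1)) (lam (i + 1))‖ ≤ Mφ * ‖lam (i + 1)‖ :=
        le_trans ((Dφ (xk1 (i + 1))).le_opNorm _)
          (mul_le_mul_of_nonneg_right (hDφ _) (norm_nonneg _))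
      have hDx : ‖Dφ (xk1 (i + 1)) (xk1 (i + 2) - xk (i + 2))‖
          ≤ Mφ * ‖xk1 (i + 2) - xk (i + 2)‖ :=
        le_trans ((Dφ (xk1 (i + 1))).le_opNorm _)
          (mul_le_mul_of_nonneg_right (hDφ _) (norm_nonneg _))
      have hstep : ‖lam i‖ ≤ Mφ * ‖lam (i + 1)‖ + Mf
          + ρ (i + 1) * (Mφ * ‖xk1 (i + 2) - xk (i + 2)‖)
          + 1 / η (i + 1) * ‖xk1 (i + 1) - xk (i + 1)‖ := by
        rw [hrec i h2]
        have t1 : ‖Dφ (xk1 (i + 1)) (lam (i + 1)) - gradf (i + 1) (xk1 (i + 1))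
            - ρ (i + 1) • Dφ (xk1 (i + 1)) (xk1 (i + 2) - xk (i + 2))
            - (1 / η (i + 1)) • (xk1 (i + 1) - xk (i + 1))‖
            ≤ ‖Dφ (xk1 (i + 1)) (lam (i + 1))‖ + ‖gradf (i + 1) (xk1 (i + 1))‖
              + ‖ρ (i + 1) • Dφ (xk1 (i + 1)) (xk1 (i + 2) - xk (i + 2))‖
              + ‖(1 / η (i + 1)) • (xk1 (i + 1) - xk (i + 1))‖ := by
          calc _ ≤ ‖Dφ (xk1 (i + 1)) (lam (i + 1)) - gradf (i + 1) (xk1 (i + 1))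
                - ρ (i + 1) • Dφ (xk1 (i + 1)) (xk1 (i + 2) - xk (i + 2))‖
                + ‖(1 / η (i + 1)) • (xk1 (i + 1) - xk (i + 1))‖ := norm_sub_le _ _
            _ ≤ ‖Dφ (xk1 (i + 1)) (lam (i + 1)) - gradf (i + 1) (xk1 (i + 1))‖
                + ‖ρ (i + 1) • Dφ (xk1 (i + 1)) (xk1 (i + 2) - xk (i + 2))‖
                + ‖(1 / η (i + 1)) • (xk1 (i + 1) - xk (i + 1))‖ := by
                  gcongr; exact norm_sub_le _ _
            _ ≤ _ := by gcongr; exact norm_sub_le _ _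
        have t2 : ‖ρ (i + 1) • Dφ (xk1 (i + 1)) (xk1 (i + 2) - xk (i + 2))‖
            ≤ ρ (i + 1) * (Mφ * ‖xk1 (i + 2) - xk (i + 2)‖) := by
          rw [norm_smul, Real.norm_eq_abs, abs_of_pos (hρ _)]
          exact mul_le_mul_of_nonneg_left hDx (hρ _).le
        have t3 : ‖(1 / η (i + 1)) • (xk1 (i + 1) - xk (i + 1))‖
            = 1 / η (i + 1) * ‖xk1 (i + 1) - xk (i + 1)‖ := by
          rw [norm_smul, Real.norm_eq_abs, abs_of_pos (div_pos one_pos (hη (i + 1)))]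
        have := hgf (i + 1) (xk1 (i + 1))
        linarith [t1, t2]
      -- combine with induction hypothesis
      have hcomb : ‖lam i‖ ≤ Mφ * ((1 - Mφ ^ (n - (i + 1))) / (1 - Mφ) * Mf
            + ∑ j ∈ Finset.Ico (i + 1) (n - 1), ρ (j + 1) * Mφ ^ (j + 1 - (i + 1)) * ‖xk1 (j + 2) - xk (j + 2)‖
            + ∑ j ∈ Finset.Ico (i + 1) n, Mφ ^ (j - (i + 1)) / η (j + 1) * ‖xk1 (j + 1) - xk (j + 1)‖)
          + Mf + ρ (i + 1) * (Mφ * ‖xk1 (i + 2) - xk (i + 2)‖)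
          + 1 / η (i + 1) * ‖xk1 (i + 1) - xk (i + 1)‖ := by
        refine le_trans hstep ?_
        have := mul_le_mul_of_nonneg_left hb hMφ
        linarith
      refine le_trans hcomb (le_of_eq ?_)
      -- now pure algebra: show equality of the two sides
      have hgeom : Mφ * ((1 - Mφ ^ (n - (i + 1))) / (1 - Mφ) * Mf) + Mf
          = (1 - Mφ ^ (n - i)) / (1 - Mφ) * Mf := by
        have hni : n - i = (n - (i + 1)) + 1 := by omega
        rw [hni]
        field_simp
        ring
      have hS1 : ∑ j ∈ Finset.Ico i (n - 1), ρ (j + 1) * Mφ ^ (j + 1 - i) * ‖xk1 (j + 2) - xk (j + 2)‖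
          = ρ (i + 1) * (Mφ * ‖xk1 (i + 2) - xk (i + 2)‖)
            + Mφ * ∑ j ∈ Finset.Ico (i + 1) (n - 1), ρ (j + 1) * Mφ ^ (j + 1 - (i + 1)) * ‖xk1 (j + 2) - xk (j + 2)‖ := by
        rw [Finset.sum_eq_sum_Ico_succ_bot (by omega : i < n - 1)]
        rw [Finset.mul_sum]
        congr 1
        · rw [show i + 1 - i = 1 by omega, pow_one]; ring
        · refine Finset.sum_congr rfl fun j hj => ?_
          have hj1 : i + 1 ≤ j := (Finset.mem_Ico.mp hj).1
          rw [show j + 1 - i = (j + 1 - (i + 1)) + 1 by omega, pow_succ]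
          ring
      have hS2 : ∑ j ∈ Finset.Ico i n, Mφ ^ (j - i) / η (j + 1) * ‖xk1 (j + 1) - xk (j + 1)‖
          = 1 / η (i + 1) * ‖xk1 (i + 1) - xk (i + 1)‖
            + Mφ * ∑ j ∈ Finset.Ico (i + 1) n, Mφ ^ (j - (i + 1)) / η (j + 1) * ‖xk1 (j + 1) - xk (j + 1)‖ := by
        rw [Finset.sum_eq_sum_Ico_succ_bot (by omega : i < n)]
        rw [Finset.mul_sum]
        congr 1
        · rw [Nat.sub_self, pow_zero]
        · refine Finset.sum_congr rfl fun j hj => ?_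
          have hj1 : i + 1 ≤ j := (Finset.mem_Ico.mp hj).1
          rw [show j - i = (j - (i + 1)) + 1 by omega, pow_succ]
          ring
      rw [hS1, hS2, ← hgeom]
      ring
  intro i hi
  exact key (n - 1 - i) i hi rfl
end
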